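/- Let λ ∈ ∂𝔻 be an irrational rotation, let φ ∈ H^∞(𝔻), and let T = R_λ φ(B) on H²(𝔻). If there exist z₀ ∈ 𝔻 and a subsequence (n_k) of positive integers such that Ψ_{n_k}(z₀) → 0, then there is a dense subset X₀ of H²(𝔻) such that T^{n_k} x → 0 for every x ∈ X₀ (that is, T satisfies condition X₀ of the Hypercyclicity Criterion along (n_k)). -/

import Mathlib

open Complex Metric Filter Topology ComplexConjugate

noncomputable section

/-- The Hardy space `H²(𝔻)`, modeled via Taylor coefficients as the sequence space `ℓ²`:
an analytic function `f(z) = Σ aₙ zⁿ` on the unit disk with `Σ |aₙ|² < ∞` is identified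
with its coefficient sequence. -/
abbrev H2 := lp (fun _ : ℕ => ℂ) 2

/-- The analytic function on the unit disk represented by an element of `H²`. -/
def H2.toFun (f : H2) (z : ℂ) : ℂ := ∑' n : ℕ, f n * z ^ n

/-- `B` is the backward shift `(Bf)(z) = (f(z) - f(0))/z`, i.e. on Taylor coefficients
`(Bf)ₙ = f_{n+1}`. -/
def IsBackwardShift (B : H2 →L[ℂ] H2) : Prop :=
  ∀ (f : H2) (n : ℕ), B f n = f (n + 1)

/-- `R` is the dilation operator `(R_λ f)(z) = f(λ z)`, i.e. on Taylor coefficients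
`(R_λ f)ₙ = λⁿ fₙ`. -/
def IsDilation (lam : ℂ) (R : H2 →L[ℂ] H2) : Prop :=
  ∀ (f : H2) (n : ℕ), R f n = lam ^ n * f n

/-- `φ ∈ H^∞(𝔻)`: a bounded analytic function on the open unit disk. -/
def InHinf (φ : ℂ → ℂ) : Prop :=
  DifferentiableOn ℂ φ (ball (0:ℂ) 1) ∧ ∃ M : ℝ, ∀ z ∈ ball (0:ℂ) 1, ‖φ z‖ ≤ M

/-- `Φ = φ(B)`, the coanalytic Toeplitz operator `M_{φ̄}⋆` with symbol `φ`: there is a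
Taylor coefficient sequence `c` for `φ` on the disk such that
`(Φ f)ₙ = Σ_k c_k f_{n+k}` (equivalently `Φ = Σ_k c_k B^k`). -/
def IsCoToeplitz (φ : ℂ → ℂ) (Φ : H2 →L[ℂ] H2) : Prop :=
  ∃ c : ℕ → ℂ,
    (∀ z ∈ ball (0:ℂ) 1, HasSum (fun k => c k * z ^ k) (φ z)) ∧
    (∀ (f : H2) (n : ℕ), HasSum (fun k => c k * f (n + k)) (Φ f n))

/-- An operator `T` is hypercyclic if some vector has dense orbit `{Tⁿ x : n ∈ ℕ}`. -/
def Hypercyclic (T : H2 →L[ℂ] H2) : Prop :=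
  ∃ x : H2, Dense (Set.range fun n : ℕ => (T ^ n) x)

/-- An operator `T` is supercyclic if for some vector `x` the set of scalar multiples
`{μ Tⁿ x : μ ∈ ℂ, n ∈ ℕ}` is dense. -/
def Supercyclic (T : H2 →L[ℂ] H2) : Prop :=
  ∃ x : H2, Dense {y : H2 | ∃ (μ : ℂ) (n : ℕ), y = μ • (T ^ n) x}

/-- `φ̄(z) = conj (φ (conj z))`. -/
def conjSymb (φ : ℂ → ℂ) (z : ℂ) : ℂ := conj (φ (conj z))

/-- `λ` is an irrational rotation: `|λ| = 1` and `λ` is not a root of unity. -/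
def IsIrrationalRotation (lam : ℂ) : Prop :=
  ‖lam‖ = 1 ∧ ∀ n : ℕ, 0 < n → lam ^ n ≠ 1

/-- `Ψ_n(z) = φ̄(z)·φ̄(αz)⋯φ̄(α^{n-1}z)` where `α = conj λ`. -/
def psiProd (φ : ℂ → ℂ) (lam : ℂ) (n : ℕ) (z : ℂ) : ℂ :=
  ∏ j ∈ Finset.range n, conjSymb φ ((conj lam) ^ j * z)

/-- `Ω_n(z) = φ̄(ωz)·φ̄(ω²z)⋯φ̄(ωⁿz)` where `ω = 1/conj λ`. -/
def omegaProd (φ : ℂ → ℂ) (lam : ℂ) (n : ℕ) (z : ℂ) : ℂ :=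
  ∏ j ∈ Finset.range n, conjSymb φ (((conj lam)⁻¹) ^ (j + 1) * z)

lemma memℓp_geom {a : ℂ} (ha : ‖a‖ < 1) : Memℓp (fun n : ℕ => (conj a) ^ n) 2 := by
  apply memℓp_gen
  have hs : Summable fun n : ℕ => (‖a‖ ^ 2) ^ n :=
    summable_geometric_of_lt_one (by positivity) (by nlinarith [norm_nonneg a])
  refine hs.congr fun n => ?_
  rw [norm_pow]
  simp only [RCLike.norm_conj]
  rw [ENNReal.toReal_ofNat, Real.rpow_two]
  ring

/-- The reproducing kernel `k_a(z) = 1/(1 - conj(a) z) = Σ (conj a)ⁿ zⁿ` of `H²(𝔻)`,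
as an element of `H²` (junk value `0` if `a` is outside the unit disk). -/
def kernelVec (a : ℂ) : H2 :=
  if ha : ‖a‖ < 1 then ⟨fun n => (conj a) ^ n, memℓp_geom ha⟩ else 0

/-- `T` satisfies the Hypercyclicity Criterion for the sequence `(n_k)`. -/
def SatisfiesHCCriterion (T : H2 →L[ℂ] H2) (nk : ℕ → ℕ) : Prop :=
  ∃ (X₀ Y₀ : Set H2) (S : ℕ → H2 → H2),
    Dense X₀ ∧ Dense Y₀ ∧
    (∀ x ∈ X₀, Tendsto (fun k => (T ^ nk k) x) atTop (𝓝 0)) ∧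
    (∀ y ∈ Y₀, Tendsto (fun k => S k y) atTop (𝓝 0)) ∧
    (∀ y ∈ Y₀, Tendsto (fun k => (T ^ nk k) (S k y)) atTop (𝓝 y))

/-- A family `F` of functions is normal at `z₀`: on some open neighborhood of `z₀`,
every (sub)sequence of the family has a locally uniformly convergent subsequence. -/
def NormalAt (F : ℕ → ℂ → ℂ) (z₀ : ℂ) : Prop :=
  ∃ U : Set ℂ, IsOpen U ∧ z₀ ∈ U ∧
    ∀ g : ℕ → ℕ, StrictMono g →
      ∃ (h : ℕ → ℕ) (f : ℂ → ℂ), StrictMono h ∧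
        TendstoLocallyUniformlyOn (fun j => F (g (h j))) f atTop U

/-- The family `{F n : n ≥ 1}` is uniformly bounded on compact subsets of the unit disk. -/
def UnifBddOnCompacts (F : ℕ → ℂ → ℂ) : Prop :=
  ∀ K : Set ℂ, K ⊆ ball (0:ℂ) 1 → IsCompact K →
    ∃ M : ℝ, ∀ n : ℕ, 1 ≤ n → ∀ z ∈ K, ‖F n z‖ ≤ M
/-!
For `‖a‖ < 1`, `φ(B) k_a = φ(conj a) k_a` and `R_λ k_a = k_{conj λ · a}`, so
`Tⁿ k_a = conj (Ψₙ(a)) k_{αⁿ a}` with `‖k_{αⁿ a}‖ = ‖k_a‖`: hence `T^{n_k} k_a → 0` as soon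
as `Ψ_{n_k}(a) → 0`. It therefore suffices to find infinitely many such points `a` in a disk
`‖a‖ ≤ r < 1`: the span of their kernels is dense, because a vector orthogonal to all of them is
a function in `H²` vanishing on a set with an accumulation point in `𝔻`.

Such points come from `Ψₙ₊₁(a) = Ψₙ(αa) φ̄(a) = Ψₙ(a) φ̄(αⁿa)`. If `z₀ = 0`, then `|φ(0)| < 1`,
so `|φ̄| ≤ c < 1` near `0` and `Ψₙ → 0` on a small disk. If `z₀ ≠ 0`, the orbit `αᵐ z₀` works
unless some `φ̄(αʲ z₀)` vanishes; then `Ψₙ` vanishes for large `n` at every point `λᵐ αʲ z₀`.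
Both orbits are infinite since `λ` is not a root of unity.
-/

lemma tendsto_zero_of_mem_span {ι R E F : Type*} [Semiring R] [AddCommMonoid E] [Module R E]
    [AddCommMonoid F] [Module R F] [TopologicalSpace F] [ContinuousAdd F] [ContinuousConstSMul R F]
    (A : ι → E →ₗ[R] F) (l : Filter ι) {s : Set E}
    (hs : ∀ x ∈ s, Tendsto (fun i => A i x) l (𝓝 0)) {x : E} (hx : x ∈ Submodule.span R s) :
    Tendsto (fun i => A i x) l (𝓝 0) := by
  induction hx using Submodule.span_induction with
  | mem x hx => exact hs x hx
  | zero => simpa using tendsto_const_nhds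
  | add x y _ _ hx hy => simpa using hx.add hy
  | smul c x _ hx => simpa using hx.const_smul c

lemma isIrrationalRotation_conj {lam : ℂ} (hlam : IsIrrationalRotation lam) :
    IsIrrationalRotation (conj lam) :=
  ⟨by rw [RCLike.norm_conj, hlam.1], fun n hn h => hlam.2 n hn (by simpa using congrArg conj h)⟩

lemma IsIrrationalRotation.infinite_range_pow_mul {lam : ℂ} (hlam : IsIrrationalRotation lam)
    {b : ℂ} (hb : b ≠ 0) : (Set.range fun m : ℕ => lam ^ m * b).Infinite := by
  have h0 : lam ≠ 0 := by rintro rfl; simpa using hlam.1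
  have hu : ¬IsOfFinOrder (Units.mk0 lam h0) := fun h => by
    obtain ⟨n, hn, h1⟩ := isOfFinOrder_iff_pow_eq_one.1 h
    exact hlam.2 n hn (by simpa using congrArg Units.val h1)
  refine Set.infinite_range_of_injective ((mul_left_injective₀ hb).comp ?_)
  simpa [Function.comp_def] using Units.val_injective.comp (injective_pow_iff_not_isOfFinOrder.2 hu)

lemma kernelVec_apply {a : ℂ} (ha : ‖a‖ < 1) (n : ℕ) : kernelVec a n = conj a ^ n := by
  rw [kernelVec, dif_pos ha]

lemma norm_kernelVec_mul {u a : ℂ} (hu : ‖u‖ = 1) (ha : ‖a‖ < 1) :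
    ‖kernelVec (u * a)‖ = ‖kernelVec a‖ := by
  have hua : ‖u * a‖ < 1 := by rwa [norm_mul, hu, one_mul]
  have h2 : (0:ℝ) < (2 : ENNReal).toReal := by norm_num
  rw [lp.norm_eq_tsum_rpow h2, lp.norm_eq_tsum_rpow h2]
  simp [kernelVec_apply hua, kernelVec_apply ha, hu]

lemma IsCoToeplitz.apply_kernelVec {φ : ℂ → ℂ} {Φ : H2 →L[ℂ] H2} (hΦ : IsCoToeplitz φ Φ)
    {a : ℂ} (ha : ‖a‖ < 1) : Φ (kernelVec a) = φ (conj a) • kernelVec a := by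
  obtain ⟨c, hc_symb, hc_op⟩ := hΦ
  ext n
  have hsum : HasSum (fun k => conj a ^ n * (c k * conj a ^ k)) (conj a ^ n * φ (conj a)) :=
    (hc_symb _ (by simpa using ha)).mul_left _
  have hop := hc_op (kernelVec a) n
  simp only [kernelVec_apply ha, pow_add] at hop
  rw [hop.unique (by convert hsum using 2; ring), lp.coeFn_smul, Pi.smul_apply, smul_eq_mul,
    kernelVec_apply ha, mul_comm]

lemma IsDilation.apply_kernelVec {lam : ℂ} {R : H2 →L[ℂ] H2} (hR : IsDilation lam R)
    (hlam : ‖lam‖ ≤ 1) {a : ℂ} (ha : ‖a‖ < 1) : R (kernelVec a) = kernelVec (conj lam * a) := by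
  have hla : ‖conj lam * a‖ < 1 := by
    rw [norm_mul, RCLike.norm_conj]
    exact (mul_le_of_le_one_left (norm_nonneg a) hlam).trans_lt ha
  ext n
  rw [hR, kernelVec_apply ha, kernelVec_apply hla, map_mul, Complex.conj_conj, mul_pow]

lemma norm_conjSymb (φ : ℂ → ℂ) (z : ℂ) : ‖conjSymb φ z‖ = ‖φ (conj z)‖ :=
  RCLike.norm_conj _

lemma psiProd_succ (φ : ℂ → ℂ) (lam : ℂ) (n : ℕ) (a : ℂ) :
    psiProd φ lam (n + 1) a = psiProd φ lam n a * conjSymb φ (conj lam ^ n * a) :=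
  Finset.prod_range_succ _ n

lemma psiProd_succ' (φ : ℂ → ℂ) (lam : ℂ) (n : ℕ) (a : ℂ) :
    psiProd φ lam (n + 1) a = psiProd φ lam n (conj lam * a) * conjSymb φ a := by
  simp only [psiProd, Finset.prod_range_succ', pow_succ, pow_zero, one_mul, mul_assoc]

lemma psiProd_eq_zero {φ : ℂ → ℂ} {lam a : ℂ} {j n : ℕ} (hj : conjSymb φ (conj lam ^ j * a) = 0)
    (hjn : j < n) : psiProd φ lam n a = 0 :=
  Finset.prod_eq_zero (Finset.mem_range.2 hjn) hj

lemma norm_psiProd_le {φ : ℂ → ℂ} {lam a : ℂ} {C : ℝ} (hlam : ‖lam‖ = 1)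
    (hC : ∀ w, ‖w‖ = ‖a‖ → ‖conjSymb φ w‖ ≤ C) (n : ℕ) : ‖psiProd φ lam n a‖ ≤ C ^ n := by
  rw [psiProd, norm_prod]
  calc _ ≤ ∏ _j ∈ Finset.range n, C := Finset.prod_le_prod (fun _ _ => norm_nonneg _)
        fun j _ => hC _ (by rw [norm_mul, norm_pow, RCLike.norm_conj, hlam, one_pow, one_mul])
    _ = C ^ n := by simp

lemma pow_apply_kernelVec {lam : ℂ} (hlam : ‖lam‖ = 1) {φ : ℂ → ℂ} {R Φ : H2 →L[ℂ] H2}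
    (hR : IsDilation lam R) (hΦ : IsCoToeplitz φ Φ) (n : ℕ) {a : ℂ} (ha : ‖a‖ < 1) :
    ((R ∘L Φ) ^ n) (kernelVec a) = conj (psiProd φ lam n a) • kernelVec (conj lam ^ n * a) := by
  induction n generalizing a with
  | zero => simp [psiProd]
  | succ n ih =>
    have hla : ‖conj lam * a‖ < 1 := by rwa [norm_mul, RCLike.norm_conj, hlam, one_mul]
    rw [pow_succ, mul_apply_eq_comp, ContinuousLinearMap.comp_apply,
      hΦ.apply_kernelVec ha, map_smul, hR.apply_kernelVec hlam.le ha, map_smul, ih hla, smul_smul,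
      psiProd_succ', map_mul, conjSymb, Complex.conj_conj, pow_succ, mul_assoc, mul_comm (φ _)]

lemma tendsto_pow_apply_kernelVec {lam : ℂ} (hlam : ‖lam‖ = 1) {φ : ℂ → ℂ} {R Φ : H2 →L[ℂ] H2}
    (hR : IsDilation lam R) (hΦ : IsCoToeplitz φ Φ) {nk : ℕ → ℕ} {a : ℂ} (ha : ‖a‖ < 1)
    (hΨ : Tendsto (fun k => psiProd φ lam (nk k) a) atTop (𝓝 0)) :
    Tendsto (fun k => ((R ∘L Φ) ^ nk k) (kernelVec a)) atTop (𝓝 0) := by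
  have hnorm (n : ℕ) :
      ‖((R ∘L Φ) ^ n) (kernelVec a)‖ = ‖psiProd φ lam n a‖ * ‖kernelVec a‖ := by
    rw [pow_apply_kernelVec hlam hR hΦ n ha, norm_smul, RCLike.norm_conj,
      norm_kernelVec_mul (by simp [hlam]) ha]
  rw [tendsto_zero_iff_norm_tendsto_zero] at hΨ ⊢
  simpa only [hnorm, zero_mul] using hΨ.mul_const ‖kernelVec a‖

namespace H2

lemma hasFPowerSeriesOnBall_toFun (f : H2) :
    HasFPowerSeriesOnBall (H2.toFun f) (FormalMultilinearSeries.ofScalars ℂ (⇑f)) 0 1 where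
  r_le := by
    simpa using (FormalMultilinearSeries.ofScalars ℂ (⇑f)).le_radius_of_bound ‖f‖ (r := 1)
      fun n => by
        simpa [FormalMultilinearSeries.ofScalars_norm] using lp.norm_apply_le_norm two_ne_zero f n
  r_pos := zero_lt_one
  hasSum {y} hy := by
    have hy1 : ‖y‖ < 1 := by simpa [enorm_eq_nnnorm, ← NNReal.coe_lt_one] using hy
    simp only [zero_add, FormalMultilinearSeries.ofScalars_apply_eq, smul_eq_mul]
    refine Summable.hasSum (Summable.of_norm_bounded
      ((summable_geometric_of_lt_one (norm_nonneg y) hy1).mul_left ‖f‖) fun n => ?_)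
    rw [norm_mul, norm_pow]
    gcongr
    exact lp.norm_apply_le_norm two_ne_zero f n

lemma inner_kernelVec (f : H2) {a : ℂ} (ha : ‖a‖ < 1) : inner ℂ (kernelVec a) f = H2.toFun f a := by
  rw [lp.inner_eq_tsum]
  refine tsum_congr fun n => ?_
  rw [RCLike.inner_apply, kernelVec_apply ha, map_pow, Complex.conj_conj, mul_comm]

lemma eq_zero_of_toFun_eq_zero {f : H2} {S : Set ℂ} {z : ℂ} (hz : ‖z‖ < 1) (hacc : AccPt z (𝓟 S))
    (hS : ∀ a ∈ S, H2.toFun f a = 0) : f = 0 := by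
  have hps := hasFPowerSeriesOnBall_toFun f
  have hzero : Set.EqOn (H2.toFun f) 0 (eball 0 1) :=
    hps.analyticOnNhd.eqOn_zero_of_preconnected_of_frequently_eq_zero isPreconnected_eball
      (by simpa [enorm_eq_nnnorm, ← NNReal.coe_lt_one] using hz)
      ((accPt_iff_frequently_nhdsNE.1 hacc).mono hS)
  have hseries := hps.hasFPowerSeriesAt.eq_zero_of_eventually
    (Filter.eventuallyEq_of_mem (isOpen_eball.mem_nhds (by simp)) hzero)
  ext n
  exact congrFun (FormalMultilinearSeries.ofScalars_series_eq_zero ℂ |>.1 hseries) n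

end H2

lemma dense_span_kernelVec {S : Set ℂ} {r : ℝ} (hr : r < 1) (hS : S ⊆ closedBall 0 r)
    (hinf : S.Infinite) : Dense (Submodule.span ℂ (kernelVec '' S) : Set H2) := by
  rw [Submodule.dense_iff_topologicalClosure_eq_top, Submodule.topologicalClosure_eq_top_iff,
    Submodule.eq_bot_iff]
  intro f hf
  have hS1 {a} (ha : a ∈ S) : ‖a‖ < 1 := (mem_closedBall_zero_iff.1 (hS ha)).trans_lt hr
  obtain ⟨z, hz, hacc⟩ := hinf.exists_accPt_of_subset_isCompact (isCompact_closedBall 0 r) hS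
  refine H2.eq_zero_of_toFun_eq_zero ((mem_closedBall_zero_iff.1 hz).trans_lt hr) hacc
    fun a ha => ?_
  rw [← H2.inner_kernelVec f (hS1 ha)]
  exact (Submodule.mem_orthogonal _ f).1 hf _ (Submodule.subset_span ⟨a, ha, rfl⟩)

def psiNullSet (φ : ℂ → ℂ) (lam : ℂ) (nk : ℕ → ℕ) : Set ℂ :=
  {a | Tendsto (fun k => psiProd φ lam (nk k) a) atTop (𝓝 0)}

lemma norm_lt_one_of_zero_mem_psiNullSet {φ : ℂ → ℂ} {lam : ℂ} {nk : ℕ → ℕ}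
    (h : (0 : ℂ) ∈ psiNullSet φ lam nk) : ‖φ 0‖ < 1 := by
  have hpsi (n : ℕ) : ‖psiProd φ lam n 0‖ = ‖φ 0‖ ^ n := by simp [psiProd, norm_conjSymb]
  by_contra! h1
  have := ge_of_tendsto' (tendsto_norm_zero.comp h) fun k =>
    (one_le_pow₀ (n := nk k) h1).trans_eq (hpsi (nk k)).symm
  norm_num at this

lemma exists_closedBall_subset_psiNullSet {φ : ℂ → ℂ} {lam : ℂ} {nk : ℕ → ℕ} (hlam : ‖lam‖ = 1)
    (hφ : ContinuousAt φ 0) (h0 : ‖φ 0‖ < 1) (hnk : Tendsto nk atTop atTop) :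
    ∃ δ, 0 < δ ∧ δ < 1 ∧ closedBall 0 δ ⊆ psiNullSet φ lam nk := by
  obtain ⟨c, hc0, hc1⟩ := exists_between h0
  obtain ⟨ε, hε, hball⟩ := Metric.eventually_nhds_iff.1 (hφ.norm.eventually (gt_mem_nhds hc0))
  refine ⟨min (ε / 2) (1 / 2), by positivity, (min_le_right _ _).trans_lt (by norm_num),
    fun a ha => ?_⟩
  have hbound (w : ℂ) (hw : ‖w‖ = ‖a‖) : ‖conjSymb φ w‖ ≤ c := by
    rw [norm_conjSymb]
    refine (hball ?_).le
    rw [dist_zero_right, RCLike.norm_conj, hw]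
    exact (mem_closedBall_zero_iff.1 ha).trans_lt ((min_le_left _ _).trans_lt (half_lt_self hε))
  exact squeeze_zero_norm (fun k => norm_psiProd_le hlam hbound (nk k))
    ((tendsto_pow_atTop_nhds_zero_of_lt_one ((norm_nonneg _).trans hc0.le) hc1).comp hnk)

lemma range_pow_mul_subset_psiNullSet {φ : ℂ → ℂ} {lam b : ℂ} {nk : ℕ → ℕ} (hlam : ‖lam‖ = 1)
    (hb : conjSymb φ b = 0) (hnk : Tendsto nk atTop atTop) :
    (Set.range fun m : ℕ => lam ^ m * b) ⊆ psiNullSet φ lam nk := by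
  rintro _ ⟨m, rfl⟩
  have hback : conj lam ^ m * (lam ^ m * b) = b := by
    rw [← mul_assoc, ← mul_pow, Complex.conj_mul', hlam]
    simp
  rw [← hback] at hb
  refine tendsto_const_nhds.congr' ?_
  filter_upwards [hnk.eventually_gt_atTop m] with k hk
  exact (psiProd_eq_zero hb hk).symm

lemma conj_mul_mem_psiNullSet {φ : ℂ → ℂ} {lam a : ℂ} {nk : ℕ → ℕ} {M : ℝ} (hlam : ‖lam‖ = 1)
    (hM : ∀ w, ‖w‖ = ‖a‖ → ‖conjSymb φ w‖ ≤ M) (ha0 : conjSymb φ a ≠ 0)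
    (ha : a ∈ psiNullSet φ lam nk) : conj lam * a ∈ psiNullSet φ lam nk := by
  have hbound (n : ℕ) :
      ‖psiProd φ lam n (conj lam * a)‖ ≤ ‖psiProd φ lam n a‖ * M / ‖conjSymb φ a‖ := by
    rw [le_div_iff₀ (norm_pos_iff.2 ha0), ← norm_mul, ← psiProd_succ', psiProd_succ, norm_mul]
    gcongr
    exact hM _ (by rw [norm_mul, norm_pow, RCLike.norm_conj, hlam, one_pow, one_mul])
  refine squeeze_zero_norm (fun k => hbound (nk k)) ?_
  simpa using ((tendsto_norm_zero.comp ha).mul_const M).div_const ‖conjSymb φ a‖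

lemma pow_mul_mem_psiNullSet {φ : ℂ → ℂ} {lam z : ℂ} {nk : ℕ → ℕ} {M : ℝ} (hlam : ‖lam‖ = 1)
    (hM : ∀ w, ‖w‖ = ‖z‖ → ‖conjSymb φ w‖ ≤ M) (hz0 : ∀ j : ℕ, conjSymb φ (conj lam ^ j * z) ≠ 0)
    (hz : z ∈ psiNullSet φ lam nk) (m : ℕ) : conj lam ^ m * z ∈ psiNullSet φ lam nk := by
  induction m with
  | zero => simpa using hz
  | succ m ih =>
    have hnorm : ‖conj lam ^ m * z‖ = ‖z‖ := by
      rw [norm_mul, norm_pow, RCLike.norm_conj, hlam, one_pow, one_mul]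
    rw [pow_succ', mul_assoc]
    exact conj_mul_mem_psiNullSet hlam (hnorm ▸ hM) (hz0 m) ih

lemma exists_infinite_psiNullSet {lam : ℂ} (hlam : IsIrrationalRotation lam) {φ : ℂ → ℂ}
    (hφ : InHinf φ) {z₀ : ℂ} (hz₀ : ‖z₀‖ < 1) {nk : ℕ → ℕ} (hnk : Tendsto nk atTop atTop)
    (hΨ : z₀ ∈ psiNullSet φ lam nk) :
    ∃ r < 1, (closedBall 0 r ∩ psiNullSet φ lam nk).Infinite := by
  obtain ⟨hdiff, M, hM⟩ := hφ
  rcases eq_or_ne z₀ 0 with rfl | hz0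
  · obtain ⟨δ, hδ0, hδ1, hsub⟩ := exists_closedBall_subset_psiNullSet hlam.1
      (hdiff.continuousOn.continuousAt (ball_mem_nhds 0 one_pos))
      (norm_lt_one_of_zero_mem_psiNullSet hΨ) hnk
    refine ⟨δ, hδ1, ?_⟩
    rw [Set.inter_eq_left.2 hsub]
    exact infinite_of_mem_nhds 0 (closedBall_mem_nhds 0 hδ0)
  have hbound (w : ℂ) (hw : ‖w‖ = ‖z₀‖) : ‖conjSymb φ w‖ ≤ M := by
    rw [norm_conjSymb]
    exact hM _ (by rwa [mem_ball_zero_iff, RCLike.norm_conj, hw])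
  have hlam0 : lam ≠ 0 := norm_ne_zero_iff.1 (by rw [hlam.1]; exact one_ne_zero)
  refine ⟨‖z₀‖, hz₀, ?_⟩
  by_cases hzero : ∃ j : ℕ, conjSymb φ (conj lam ^ j * z₀) = 0
  · obtain ⟨j, hj⟩ := hzero
    refine (hlam.infinite_range_pow_mul (by simp [hz0, hlam0])).mono
      (Set.subset_inter ?_ (range_pow_mul_subset_psiNullSet hlam.1 hj hnk))
    rintro _ ⟨m, rfl⟩
    simp [hlam.1]
  · refine ((isIrrationalRotation_conj hlam).infinite_range_pow_mul hz0).mono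
      (Set.subset_inter ?_ ?_) <;> rintro _ ⟨m, rfl⟩
    · simp [hlam.1]
    · exact pow_mul_mem_psiNullSet hlam.1 hbound (not_exists.1 hzero) hΨ m

theorem stmt9_general (lam : ℂ) (hlam : IsIrrationalRotation lam)
    (φ : ℂ → ℂ) (hφ : InHinf φ)
    (R Φ T : H2 →L[ℂ] H2) (hR : IsDilation lam R) (hΦ : IsCoToeplitz φ Φ)
    (hT : T = R ∘L Φ)
    (z₀ : ℂ) (hz₀ : z₀ ∈ ball (0:ℂ) 1)
    (nk : ℕ → ℕ) (hnk : StrictMono nk)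
    (hΨ : Tendsto (fun k => psiProd φ lam (nk k) z₀) atTop (𝓝 0)) :
    ∃ X₀ : Set H2, Dense X₀ ∧
      ∀ x ∈ X₀, Tendsto (fun k => (T ^ nk k) x) atTop (𝓝 0) := by
  obtain ⟨r, hr, hinf⟩ :=
    exists_infinite_psiNullSet hlam hφ (mem_ball_zero_iff.1 hz₀) hnk.tendsto_atTop hΨ
  refine ⟨Submodule.span ℂ (kernelVec '' (closedBall 0 r ∩ psiNullSet φ lam nk)),
    dense_span_kernelVec hr Set.inter_subset_left hinf, fun x hx => ?_⟩
  subst hT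
  refine tendsto_zero_of_mem_span (fun k => ((R ∘L Φ) ^ nk k).toLinearMap) atTop ?_ hx
  rintro _ ⟨a, ⟨ha, ha_null⟩, rfl⟩
  exact tendsto_pow_apply_kernelVec hlam.1 hR hΦ ((mem_closedBall_zero_iff.1 ha).trans_lt hr)
    ha_null

theorem stmt9 (lam : ℂ) (hlam : IsIrrationalRotation lam)
    (φ : ℂ → ℂ) (hφ : InHinf φ)
    (R Φ T : H2 →L[ℂ] H2) (hR : IsDilation lam R) (hΦ : IsCoToeplitz φ Φ)
    (hT : T = R ∘L Φ)
    (z₀ : ℂ) (hz₀ : z₀ ∈ ball (0:ℂ) 1)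
    (nk : ℕ → ℕ) (hnk : StrictMono nk) (hpos : ∀ k, 0 < nk k)
    (hΨ : Tendsto (fun k => psiProd φ lam (nk k) z₀) atTop (𝓝 0)) :
    ∃ X₀ : Set H2, Dense X₀ ∧
      ∀ x ∈ X₀, Tendsto (fun k => (T ^ nk k) x) atTop (𝓝 0) :=
  stmt9_general lam hlam φ hφ R Φ T hR hΦ hT z₀ hz₀ nk hnk hΨ
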